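/- arXiv:2404.08173 — 2 statements merged into one kernel-verified Lean document; each statement's English description precedes it below -/
import Mathlib

section
/- Every simple path in a graph on n vertices is realized by the sequence (T_{ijk}(n))³, i.e., T_{ijk}(n) concatenated with itself three times. Consequently, running the IJK-ordered Floyd-Warshall loop three times computes the correct all-pairs shortest path matrix on graphs with no negative cycles. -/
/-- The sequence `T_ijk(n)`: element at position `a·n² + b·n + c` is `(a+1, b+1, c+1)`. -/
def Tijk (n : ℕ) : List (ℕ × ℕ × ℕ) :=
  (List.range n).flatMap fun a => (List.range n).flatMap fun b =>
    (List.range n).map fun c => (a + 1, b + 1, c + 1)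

/-- The sequence `T_kij(n)`: element at position `a·n² + b·n + c` is `(b+1, c+1, a+1)`. -/
def Tkij (n : ℕ) : List (ℕ × ℕ × ℕ) :=
  (List.range n).flatMap fun a => (List.range n).flatMap fun b =>
    (List.range n).map fun c => (b + 1, c + 1, a + 1)

/-- `T_ijk(n, i, j)`: the prefix of `T_ijk(n)` up to and including the tuple `(i, j, n)`. -/
def TijkPrefix (n i j : ℕ) : List (ℕ × ℕ × ℕ) :=
  (Tijk n).take ((i - 1) * n ^ 2 + (j - 1) * n + n)

/-- A path `P` (a list of vertices) is realized by a sequence `T` of 3-tuples: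
either it has at most one edge, or some position `d` of `T` holds the tuple
`(first, last, split vertex p_x)` with both halves realized by the length-`d` prefix
(`d` here is 0-indexed, so `T.take d` is the prefix strictly before position `d`). -/
inductive Realized : List (ℕ × ℕ × ℕ) → List ℕ → Prop
  | base (T : List (ℕ × ℕ × ℕ)) (P : List ℕ) (h : P.length ≤ 2) : Realized T P
  | step (T : List (ℕ × ℕ × ℕ)) (P : List ℕ) (d x : ℕ)
      (hd : d < T.length) (hx1 : 1 ≤ x) (hx2 : x ≤ P.length - 2)
      (ht : T.getD d default = (P.getD 0 0, P.getD (P.length - 1) 0, P.getD x 0))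
      (h1 : Realized (T.take d) (P.take (x + 1)))
      (h2 : Realized (T.take d) (P.drop x)) : Realized T P

/-- A path with at least one edge, all of whose vertices lie in `[1, n]`. -/
def ValidPath (n : ℕ) (P : List ℕ) : Prop :=
  2 ≤ P.length ∧ ∀ v ∈ P, 1 ≤ v ∧ v ≤ n

/-- Increasing path. -/
def Increasing (P : List ℕ) : Prop := P.Chain' (· < ·)

/-- Decreasing path. -/
def Decreasing (P : List ℕ) : Prop := P.Chain' (· > ·)

/-- Valley path: every interior vertex is at most the min of the endpoints. -/
def Valley (P : List ℕ) : Prop :=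
  ∀ t, 1 ≤ t → t ≤ P.length - 2 →
    P.getD t 0 ≤ min (P.getD 0 0) (P.getD (P.length - 1) 0)

/-- Proper path: no two consecutive vertices `p_t, p_{t+1}` with `1 ≤ t ≤ k-2`
both exceed the min of the endpoints. -/
def Proper (P : List ℕ) : Prop :=
  ¬ ∃ t, 1 ≤ t ∧ t ≤ P.length - 3 ∧
    min (P.getD 0 0) (P.getD (P.length - 1) 0) < P.getD t 0 ∧
    min (P.getD 0 0) (P.getD (P.length - 1) 0) < P.getD (t + 1) 0

/-- Total weight of a path: the sum of the weights of its consecutive edges. -/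
def pathWeight (W : ℕ → ℕ → WithTop ℤ) (P : List ℕ) : WithTop ℤ :=
  ((P.zip P.tail).map fun q => W q.1 q.2).sum

/-- One relaxation step `A[i,j] ← min(A[i,j], A[i,k] + A[k,j])` for the tuple `(i,j,k)`. -/
def relaxStep (A : ℕ → ℕ → WithTop ℤ) (t : ℕ × ℕ × ℕ) : ℕ → ℕ → WithTop ℤ :=
  fun i j => if i = t.1 ∧ j = t.2.1 then min (A i j) (A i t.2.2 + A t.2.2 j) else A i j

/-- Apply the relaxation steps of the sequence `T` in order, starting from `A`. -/
def relaxAll (A : ℕ → ℕ → WithTop ℤ) (T : List (ℕ × ℕ × ℕ)) : ℕ → ℕ → WithTop ℤ :=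
  T.foldl relaxStep A

/-- No negative cycles on the vertex set `[1, n]`. -/
def NoNegCycle (n : ℕ) (W : ℕ → ℕ → WithTop ℤ) : Prop :=
  ∀ P : List ℕ, 2 ≤ P.length → (∀ v ∈ P, 1 ≤ v ∧ v ≤ n) →
    P.getD 0 0 = P.getD (P.length - 1) 0 → 0 ≤ pathWeight W P


/-!
Split a simple path at its largest interior vertex `m`: the tuple `(first, last, m)` joins the two
halves, whose interiors are smaller. A *valley* path from `i` to `j` (interior below both ends) is
realized in the first pass before the tuple `(i, j, n)`: its halves run from `i` to `m` and from
`m` to `j` with `m < i, j`, so their tuples come earlier in the lexicographic order of `Tijk`.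
A path whose first or last vertex is its maximum splits into a shorter path of the same kind and
a valley, and is realized in the second pass before `(i, j, n)`. Any other path splits at its
maximum into one path of each of these two kinds, joined in the third pass.

For Floyd–Warshall: every entry ever computed is the weight of a walk; without negative cycles a
walk can be shortened to a simple path of no larger weight; and a path realized by `T` bounds the
entry that `T` computes for its endpoints.
-/

namespace List

variable {α : Type*}

theorem length_flatMap_range_of_length_eq {L : ℕ → List α} {K : ℕ} (hL : ∀ a, (L a).length = K)
    (N : ℕ) : ((range N).flatMap L).length = N * K := by
  simp [length_flatMap, hL]

theorem getElem?_flatMap_range {L : ℕ → List α} {K : ℕ} (hL : ∀ a, (L a).length = K)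
    {N a c : ℕ} (ha : a < N) (hc : c < K) : ((range N).flatMap L)[a * K + c]? = (L a)[c]? := by
  induction N with
  | zero => omega
  | succ N ih =>
    rw [range_succ, flatMap_append]
    rcases Nat.lt_or_ge a N with h | h
    · rw [getElem?_append_left (by rw [length_flatMap_range_of_length_eq hL]; nlinarith), ih h]
    · obtain rfl : a = N := by omega
      rw [getElem?_append_right (by rw [length_flatMap_range_of_length_eq hL]; omega)]
      simp [length_flatMap_range_of_length_eq hL]

theorem exists_eq_append_cons_append_cons_of_not_nodup {P : List α} (h : ¬P.Nodup) :
    ∃ X v Y Z, P = X ++ v :: (Y ++ v :: Z) := by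
  obtain ⟨v, hv⟩ : ∃ v, [v, v] <+ P := by simpa [nodup_iff_sublist] using h
  obtain ⟨r₁, r₂, rfl, h₁, h₂⟩ := cons_sublist_iff.mp hv
  obtain ⟨X, Y, rfl⟩ := append_of_mem h₁
  obtain ⟨Y', Z, rfl⟩ := append_of_mem (singleton_sublist.mp h₂)
  exact ⟨X, v, Y ++ Y', Z, by simp⟩

theorem exists_eq_append_cons_max {M : List ℕ} (hM : M.Nodup) (hne : M ≠ []) :
    ∃ L u R, M = L ++ u :: R ∧ (∀ v ∈ L, v < u) ∧ ∀ v ∈ R, v < u := by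
  have hmax : ∀ v ∈ M, v ≤ M.max hne := fun v hv => le_max_of_mem hv
  obtain ⟨L, R, hLR⟩ := append_of_mem (max_mem hne)
  generalize M.max hne = u at hmax hLR
  subst hLR
  have hlt : ∀ v ∈ L ++ R, v < u := fun v hv =>
    (hmax v (mem_append.mpr ((mem_append.mp hv).imp id (mem_cons_of_mem u)))).lt_of_ne
      (by rintro rfl; exact (nodup_cons.mp (nodup_middle.mp hM)).1 hv)
  exact ⟨L, u, R, rfl, fun v hv => hlt v (by simp [hv]), fun v hv => hlt v (by simp [hv])⟩

theorem exists_eq_cons_append_cons_append_singleton {P : List α} {x : ℕ} (hx₁ : 1 ≤ x)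
    (hx₂ : x ≤ P.length - 2) : ∃ i L m R j, P = i :: L ++ m :: R ++ [j] ∧ L.length + 1 = x := by
  obtain _ | ⟨i, Q⟩ := P
  · rw [length_nil] at hx₂; omega
  obtain rfl | ⟨Q', j, rfl⟩ := eq_nil_or_concat Q
  · rw [length_singleton] at hx₂; omega
  have hx : x - 1 < Q'.length := by
    rw [length_cons, concat_eq_append, length_append, length_singleton] at hx₂; omega
  refine ⟨i, Q'.take (x - 1), Q'[x - 1], Q'.drop x, j, ?_, by rw [length_take]; omega⟩
  conv_lhs => rw [← take_append_drop (x - 1) Q', drop_eq_getElem_cons hx]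
  simp [Nat.sub_add_cancel hx₁]

section split

variable (i m j d : α) (L R : List α)

theorem take_cons_append_cons_append :
    (i :: L ++ m :: R ++ [j]).take (L.length + 1 + 1) = i :: L ++ [m] := by
  simp [take_append, take_of_length_le]

theorem drop_cons_append_cons_append :
    (i :: L ++ m :: R ++ [j]).drop (L.length + 1) = m :: R ++ [j] := by
  simp

theorem getD_zero_cons_append : (i :: L ++ R).getD 0 d = i := rfl

theorem getD_zero_cons_append_cons_append : (i :: L ++ m :: R ++ [j]).getD 0 d = i := rfl

theorem getD_cons_append_cons_append : (i :: L ++ m :: R ++ [j]).getD (L.length + 1) d = m := by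
  simp

theorem getD_length_sub_one_concat (X : List α) :
    (X ++ [j]).getD ((X ++ [j]).length - 1) d = j := by
  simp

end split

variable (d : α)

theorem getD_zero_append_cons (X : List α) (v : α) (Y : List α) :
    (X ++ v :: Y).getD 0 d = (X ++ [v]).getD 0 d := by
  cases X <;> rfl

theorem getD_length_sub_one_append (X : List α) {Y : List α} (hY : Y ≠ []) :
    (X ++ Y).getD ((X ++ Y).length - 1) d = Y.getD (Y.length - 1) d := by
  have := length_pos_iff.mpr hY
  rw [getD_append_right _ _ _ _ (by rw [length_append]; omega)]
  congr 1
  rw [length_append]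
  omega

end List

namespace Realized

variable {T T' : List (ℕ × ℕ × ℕ)} {P : List ℕ}

theorem mono (h : Realized T P) (hT : T <+: T') : Realized T' P := by
  obtain ⟨T'', rfl⟩ := hT
  cases h with
  | base _ _ h => exact .base _ _ h
  | step _ _ d x hd hx₁ hx₂ ht h₁ h₂ =>
    refine .step _ _ d x (by rw [List.length_append]; omega) hx₁ hx₂ ?_ ?_ ?_
    · rwa [List.getD_append _ _ _ _ hd]
    · rwa [List.take_append_of_le_length hd.le]
    · rwa [List.take_append_of_le_length hd.le]

theorem take_mono {s d : ℕ} (h : Realized (T.take s) P) (hsd : s ≤ d) : Realized (T.take d) P :=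
  h.mono (List.take_prefix_take_left hsd)

theorem cons_append_cons {d i m j : ℕ} {L R : List ℕ} (hd : d < T.length)
    (ht : T.getD d default = (i, j, m)) (h₁ : Realized (T.take d) (i :: L ++ [m]))
    (h₂ : Realized (T.take d) (m :: R ++ [j])) : Realized T (i :: L ++ m :: R ++ [j]) := by
  refine .step _ _ d (L.length + 1) hd le_add_self (by simp) ?_ ?_ ?_
  · rwa [List.getD_zero_cons_append_cons_append, List.getD_length_sub_one_concat,
      List.getD_cons_append_cons_append]
  · rwa [List.take_cons_append_cons_append]
  · rwa [List.drop_cons_append_cons_append]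

theorem cons_append_cons_take {d s i m j : ℕ} {L R : List ℕ} (hds : d < s) (hd : d < T.length)
    (ht : T.getD d default = (i, j, m)) (h₁ : Realized (T.take d) (i :: L ++ [m]))
    (h₂ : Realized (T.take d) (m :: R ++ [j])) : Realized (T.take s) (i :: L ++ m :: R ++ [j]) := by
  refine cons_append_cons (d := d) (by simp [hd, hds]) ?_ ?_ ?_
  · rwa [List.getD_eq_getElem?_getD, List.getElem?_take, if_pos hds, ← List.getD_eq_getElem?_getD]
  · rwa [List.take_take, min_eq_left hds.le]
  · rwa [List.take_take, min_eq_left hds.le]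

end Realized

theorem Nat.mul_add_lt_mul_add_of_lt {n a a' b : ℕ} (b' : ℕ) (ha : a < a') (hb : b < n) :
    a * n + b < a' * n + b' :=
  calc a * n + b < (a + 1) * n := by rw [Nat.succ_mul]; omega
    _ ≤ a' * n + b' := (Nat.mul_le_mul_right n ha).trans (Nat.le_add_right _ _)

theorem Nat.mul_add_le_mul_add_of_lt {n a a' b : ℕ} (b' : ℕ) (ha : a < a') (hb : b ≤ n) :
    a * n + b ≤ a' * n + b' :=
  calc a * n + b ≤ (a + 1) * n := by rw [Nat.succ_mul]; omega
    _ ≤ a' * n + b' := (Nat.mul_le_mul_right n ha).trans (Nat.le_add_right _ _)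

/-- The position of `(a + 1, b + 1, c + 1)` in the `e`-th copy of `Tijk n` inside `Tijk3 n`.
With `c = n` it is the position just after `(a + 1, b + 1, n)`. -/
def slot (n e a b c : ℕ) : ℕ := ((e * n + a) * n + b) * n + c

section slot

variable {n e e' a a' b b' c c' : ℕ}

theorem slot_lt_slot_of_lt (h : c < c') : slot n e a b c < slot n e a b c' :=
  Nat.add_lt_add_left h _

theorem slot_le_slot_of_lt₃ (h : b < b') (hc : c ≤ n) : slot n e a b c ≤ slot n e a b' c' :=
  Nat.mul_add_le_mul_add_of_lt _ (Nat.add_lt_add_left h _) hc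

theorem slot_le_slot_of_lt₂ (h : a < a') (hb : b < n) (hc : c ≤ n) :
    slot n e a b c ≤ slot n e a' b' c' :=
  Nat.mul_add_le_mul_add_of_lt _ (Nat.mul_add_lt_mul_add_of_lt _ (Nat.add_lt_add_left h _) hb) hc

theorem slot_le_slot_of_lt₁ (h : e < e') (ha : a < n) (hb : b < n) (hc : c ≤ n) :
    slot n e a b c ≤ slot n e' a' b' c' :=
  Nat.mul_add_le_mul_add_of_lt _
    (Nat.mul_add_lt_mul_add_of_lt _ (Nat.mul_add_lt_mul_add_of_lt _ h ha) hb) hc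

end slot

def Tijk3 (n : ℕ) : List (ℕ × ℕ × ℕ) := Tijk n ++ Tijk n ++ Tijk n

theorem length_Tijk (n : ℕ) : (Tijk n).length = n * n * n := by
  simp [Tijk, mul_assoc]

theorem getElem?_Tijk {n a b c : ℕ} (ha : a < n) (hb : b < n) (hc : c < n) :
    (Tijk n)[(a * n + b) * n + c]? = some (a + 1, b + 1, c + 1) := by
  have hbc : b * n + c < n * n := Nat.mul_add_lt_mul_add_of_lt 0 hb hc
  rw [Tijk, add_mul, add_assoc, mul_assoc,
    List.getElem?_flatMap_range (fun _ => List.length_flatMap_range_of_length_eq (by simp) n) ha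
      hbc,
    List.getElem?_flatMap_range (by simp) hb hc]
  simp [hc]

theorem Tijk3_eq_flatMap (n : ℕ) : Tijk3 n = (List.range 3).flatMap fun _ => Tijk n := by
  simp [Tijk3, List.range_succ]

theorem length_Tijk3 (n : ℕ) : (Tijk3 n).length = slot n 3 0 0 0 := by
  rw [Tijk3, List.length_append, List.length_append, length_Tijk, slot]
  ring

theorem getD_Tijk3_slot {n e a b c : ℕ} (he : e < 3) (ha : a < n) (hb : b < n) (hc : c < n) :
    (Tijk3 n).getD (slot n e a b c) default = (a + 1, b + 1, c + 1) := by
  have habc : (a * n + b) * n + c < n * n * n :=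
    Nat.mul_add_lt_mul_add_of_lt 0 (Nat.mul_add_lt_mul_add_of_lt 0 ha hb) hc
  have hslot : slot n e a b c = e * (n * n * n) + ((a * n + b) * n + c) := by unfold slot; ring
  rw [List.getD_eq_getElem?_getD, Tijk3_eq_flatMap, hslot,
    List.getElem?_flatMap_range (fun _ => length_Tijk n) he habc, getElem?_Tijk ha hb hc]
  rfl

def IsSimplePath (n : ℕ) (P : List ℕ) : Prop := P.Nodup ∧ ∀ v ∈ P, 1 ≤ v ∧ v ≤ n

theorem IsSimplePath.sublist {n : ℕ} {P Q : List ℕ} (hP : IsSimplePath n P) (hQ : Q.Sublist P) :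
    IsSimplePath n Q :=
  ⟨hP.1.sublist hQ, fun v hv => hP.2 v (hQ.subset hv)⟩

theorem realized_take_Tijk3 {n e i j m s : ℕ} {L R : List ℕ} (he : e < 3) (hi : 1 ≤ i ∧ i ≤ n)
    (hj : 1 ≤ j ∧ j ≤ n) (hm : 1 ≤ m ∧ m ≤ n) (hs : slot n e (i - 1) (j - 1) (m - 1) < s)
    (h₁ : Realized ((Tijk3 n).take (slot n e (i - 1) (j - 1) (m - 1))) (i :: L ++ [m]))
    (h₂ : Realized ((Tijk3 n).take (slot n e (i - 1) (j - 1) (m - 1))) (m :: R ++ [j])) :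
    Realized ((Tijk3 n).take s) (i :: L ++ m :: R ++ [j]) := by
  have hlen : slot n e (i - 1) (j - 1) (m - 1) < (Tijk3 n).length := by
    rw [length_Tijk3]
    exact (slot_lt_slot_of_lt (c' := n) (by omega)).trans_le
      (slot_le_slot_of_lt₁ (by omega) (by omega) (by omega) le_rfl)
  refine Realized.cons_append_cons_take hs hlen ?_ h₁ h₂
  rw [getD_Tijk3_slot he (by omega) (by omega) (by omega)]
  congr <;> omega

theorem realized_valley {n i j : ℕ} {M : List ℕ} (hP : IsSimplePath n (i :: M ++ [j]))
    (hM : ∀ v ∈ M, v < i ∧ v < j) :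
    Realized ((Tijk3 n).take (slot n 0 (i - 1) (j - 1) n)) (i :: M ++ [j]) := by
  rcases eq_or_ne M [] with rfl | hne
  · exact .base _ _ (by simp)
  obtain ⟨L, u, R, hLR, hL, hR⟩ :=
    List.exists_eq_append_cons_max (hP.1.sublist (by simp)) hne
  rw [hLR] at hP hM ⊢
  have hi := hP.2 i (by simp)
  have hj := hP.2 j (by simp)
  have hu := hP.2 u (by simp)
  have hui := hM u (by simp)
  have h₁ := realized_valley (i := i) (j := u) (hP.sublist (by simp))
    fun v hv => ⟨(hM v (by simp [hv])).1, hL v hv⟩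
  have h₂ := realized_valley (i := u) (j := j) (hP.sublist (by simp))
    fun v hv => ⟨hR v hv, (hM v (by simp [hv])).2⟩
  exact realized_take_Tijk3 (by norm_num) hi hj hu (slot_lt_slot_of_lt (by omega))
    (h₁.take_mono (slot_le_slot_of_lt₃ (by omega) le_rfl))
    (h₂.take_mono (slot_le_slot_of_lt₂ (by omega) (by omega) le_rfl))
termination_by M.length
decreasing_by all_goals simp only [hLR, List.length_append, List.length_cons]; omega

theorem realized_of_max_last {n i j : ℕ} {M : List ℕ} (hP : IsSimplePath n (i :: M ++ [j]))
    (hM : ∀ v ∈ M, v < j) :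
    Realized ((Tijk3 n).take (slot n 1 (i - 1) (j - 1) n)) (i :: M ++ [j]) := by
  rcases eq_or_ne M [] with rfl | hne
  · exact .base _ _ (by simp)
  obtain ⟨L, u, R, hLR, hL, hR⟩ :=
    List.exists_eq_append_cons_max (hP.1.sublist (by simp)) hne
  rw [hLR] at hP hM ⊢
  have hi := hP.2 i (by simp)
  have hj := hP.2 j (by simp)
  have hu := hP.2 u (by simp)
  have huj := hM u (by simp)
  have hiu : i ≠ u := by rintro rfl; simpa using hP.1
  rcases hiu.lt_or_gt with hiu | hui
  · have h₁ := realized_of_max_last (i := i) (j := u) (hP.sublist (by simp)) hL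
    have h₂ := realized_valley (i := u) (j := j) (hP.sublist (by simp))
      fun v hv => ⟨hR v hv, hM v (by simp [hv])⟩
    exact realized_take_Tijk3 (by norm_num) hi hj hu (slot_lt_slot_of_lt (by omega))
      (h₁.take_mono (slot_le_slot_of_lt₃ (by omega) le_rfl))
      (h₂.take_mono (slot_le_slot_of_lt₁ zero_lt_one (by omega) (by omega) le_rfl))
  · have hMi : ∀ v ∈ L ++ u :: R, v < i := by
      intro v hv
      simp only [List.mem_append, List.mem_cons] at hv
      rcases hv with hv | rfl | hv
      exacts [(hL v hv).trans hui, hui, (hR v hv).trans hui]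
    exact (realized_valley hP fun v hv => ⟨hMi v hv, hM v hv⟩).take_mono
      (slot_le_slot_of_lt₁ zero_lt_one (by omega) (by omega) le_rfl)
termination_by M.length
decreasing_by simp only [hLR, List.length_append, List.length_cons]; omega

theorem realized_of_max_head {n i j : ℕ} {M : List ℕ} (hP : IsSimplePath n (i :: M ++ [j]))
    (hM : ∀ v ∈ M, v < i) :
    Realized ((Tijk3 n).take (slot n 1 (i - 1) (j - 1) n)) (i :: M ++ [j]) := by
  rcases eq_or_ne M [] with rfl | hne
  · exact .base _ _ (by simp)
  obtain ⟨L, u, R, hLR, hL, hR⟩ :=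
    List.exists_eq_append_cons_max (hP.1.sublist (by simp)) hne
  rw [hLR] at hP hM ⊢
  have hi := hP.2 i (by simp)
  have hj := hP.2 j (by simp)
  have hu := hP.2 u (by simp)
  have hui := hM u (by simp)
  have hju : j ≠ u := by rintro rfl; simpa [List.nodup_append] using hP.1
  rcases hju.lt_or_gt with hju | huj
  · have h₁ := realized_valley (i := i) (j := u) (hP.sublist (by simp))
      fun v hv => ⟨hM v (by simp [hv]), hL v hv⟩
    have h₂ := realized_of_max_head (i := u) (j := j) (hP.sublist (by simp)) hR
    exact realized_take_Tijk3 (by norm_num) hi hj hu (slot_lt_slot_of_lt (by omega))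
      (h₁.take_mono (slot_le_slot_of_lt₁ zero_lt_one (by omega) (by omega) le_rfl))
      (h₂.take_mono (slot_le_slot_of_lt₂ (by omega) (by omega) le_rfl))
  · have hMj : ∀ v ∈ L ++ u :: R, v < j := by
      intro v hv
      simp only [List.mem_append, List.mem_cons] at hv
      rcases hv with hv | rfl | hv
      exacts [(hL v hv).trans huj, huj, (hR v hv).trans huj]
    exact (realized_valley hP fun v hv => ⟨hM v hv, hMj v hv⟩).take_mono
      (slot_le_slot_of_lt₁ zero_lt_one (by omega) (by omega) le_rfl)
termination_by M.length
decreasing_by simp only [hLR, List.length_append, List.length_cons]; omega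

theorem realized_Tijk3 {n : ℕ} {P : List ℕ} (hP : IsSimplePath n P) : Realized (Tijk3 n) P := by
  obtain _ | ⟨i, Q⟩ := P
  · exact .base _ _ (by simp)
  obtain rfl | ⟨M, j, rfl⟩ := Q.eq_nil_or_concat
  · exact .base _ _ (by simp)
  rcases eq_or_ne M [] with rfl | hne
  · exact .base _ _ (by simp)
  simp only [List.concat_eq_append] at hP ⊢
  obtain ⟨L, u, R, rfl, hL, hR⟩ :=
    List.exists_eq_append_cons_max (hP.1.sublist (by simp)) hne
  have hi := hP.2 i (by simp)
  have hj := hP.2 j (by simp)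
  have hu := hP.2 u (by simp)
  have hiu : i ≠ u := by rintro rfl; simpa using hP.1
  have hju : j ≠ u := by rintro rfl; simpa [List.nodup_append] using hP.1
  have hij : i ≠ j := by rintro rfl; simpa using hP.1
  have hle : ∀ v ∈ L ++ u :: R, v ≤ u := by
    intro v hv
    simp only [List.mem_append, List.mem_cons] at hv
    rcases hv with hv | rfl | hv
    exacts [(hL v hv).le, le_rfl, (hR v hv).le]
  rw [← List.take_length (l := Tijk3 n), length_Tijk3]
  by_cases hmax : i < u ∧ j < u
  · have h₁ := realized_of_max_last (i := i) (j := u) (hP.sublist (by simp)) hL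
    have h₂ := realized_of_max_head (i := u) (j := j) (hP.sublist (by simp)) hR
    exact realized_take_Tijk3 (by norm_num : 2 < 3) hi hj hu
      ((slot_lt_slot_of_lt (c' := n) (by omega)).trans_le
        (slot_le_slot_of_lt₁ (by norm_num) (by omega) (by omega) le_rfl))
      (h₁.take_mono (slot_le_slot_of_lt₁ (by norm_num) (by omega) (by omega) le_rfl))
      (h₂.take_mono (slot_le_slot_of_lt₁ (by norm_num) (by omega) (by omega) le_rfl))
  · rcases hij.lt_or_gt with hij | hji
    · exact (realized_of_max_last hP fun v hv => (hle v hv).trans_lt (by omega)).take_mono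
        (slot_le_slot_of_lt₁ (by norm_num : 1 < 3) (by omega) (by omega) le_rfl)
    · exact (realized_of_max_head hP fun v hv => (hle v hv).trans_lt (by omega)).take_mono
        (slot_le_slot_of_lt₁ (by norm_num : 1 < 3) (by omega) (by omega) le_rfl)

section pathWeight

variable (W : ℕ → ℕ → WithTop ℤ)

@[simp] theorem pathWeight_nil : pathWeight W [] = 0 := rfl

@[simp] theorem pathWeight_singleton (a : ℕ) : pathWeight W [a] = 0 := rfl

@[simp] theorem pathWeight_cons_cons (a b : ℕ) (L : List ℕ) :
    pathWeight W (a :: b :: L) = W a b + pathWeight W (b :: L) := by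
  simp [pathWeight]

theorem pathWeight_append_cons (X : List ℕ) (v : ℕ) (Y : List ℕ) :
    pathWeight W (X ++ v :: Y) = pathWeight W (X ++ [v]) + pathWeight W (v :: Y) := by
  induction X with
  | nil => simp
  | cons a X ih =>
    cases X with
    | nil => simp
    | cons b X => simp only [List.cons_append, pathWeight_cons_cons] at ih ⊢; rw [ih, add_assoc]

end pathWeight

section relax

variable (A : ℕ → ℕ → WithTop ℤ)

theorem relaxStep_le (t : ℕ × ℕ × ℕ) (i j : ℕ) : relaxStep A t i j ≤ A i j := by
  unfold relaxStep
  split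
  exacts [min_le_left _ _, le_rfl]

theorem relaxAll_le (T : List (ℕ × ℕ × ℕ)) (i j : ℕ) : relaxAll A T i j ≤ A i j := by
  induction T generalizing A with
  | nil => exact le_rfl
  | cons t T ih => exact (ih _).trans (relaxStep_le A t i j)

theorem relaxAll_le_add_of_getD_eq {T : List (ℕ × ℕ × ℕ)} {d i j m : ℕ} (hd : d < T.length)
    (ht : T.getD d default = (i, j, m)) :
    relaxAll A T i j ≤ relaxAll A (T.take d) i m + relaxAll A (T.take d) m j := by
  rw [List.getD_eq_getElem _ _ hd] at ht
  have hT : T = T.take d ++ (i, j, m) :: T.drop (d + 1) := by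
    rw [← ht, ← List.drop_eq_getElem_cons hd, List.take_append_drop]
  calc relaxAll A T i j
      = relaxAll (relaxStep (relaxAll A (T.take d)) (i, j, m)) (T.drop (d + 1)) i j := by
        conv_lhs => rw [hT, relaxAll, List.foldl_append, List.foldl_cons]
        rfl
    _ ≤ relaxStep (relaxAll A (T.take d)) (i, j, m) i j := relaxAll_le _ _ i j
    _ ≤ _ := by simp [relaxStep]

theorem Realized.relaxAll_le_pathWeight (hA : ∀ i, A i i = 0) {T : List (ℕ × ℕ × ℕ)}
    {P : List ℕ} (h : Realized T P) (hP : P ≠ []) :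
    relaxAll A T (P.getD 0 0) (P.getD (P.length - 1) 0) ≤ pathWeight A P := by
  induction h with
  | base T P hlen =>
    match P, hlen, hP with
    | [a], _, _ => simpa [hA] using relaxAll_le A T a a
    | [a, b], _, _ => simpa using relaxAll_le A T a b
  | step T P d x hd hx₁ hx₂ ht _ _ ih₁ ih₂ =>
    obtain ⟨i, L, m, R, j, rfl, rfl⟩ := List.exists_eq_cons_append_cons_append_singleton hx₁ hx₂
    rw [List.take_cons_append_cons_append, List.getD_zero_cons_append,
      List.getD_length_sub_one_concat] at ih₁
    rw [List.drop_cons_append_cons_append, List.getD_zero_cons_append,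
      List.getD_length_sub_one_concat] at ih₂
    rw [List.getD_zero_cons_append_cons_append, List.getD_cons_append_cons_append,
      List.getD_length_sub_one_concat] at ht
    rw [List.getD_zero_cons_append_cons_append, List.getD_length_sub_one_concat]
    calc relaxAll A T i j
        ≤ relaxAll A (T.take d) i m + relaxAll A (T.take d) m j :=
          relaxAll_le_add_of_getD_eq A hd ht
      _ ≤ pathWeight A (i :: L ++ [m]) + pathWeight A (m :: R ++ [j]) :=
          add_le_add (ih₁ (by simp)) (ih₂ (by simp))
      _ = _ := by
        rw [show i :: L ++ m :: R ++ [j] = i :: L ++ m :: (R ++ [j]) by simp,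
          pathWeight_append_cons A (i :: L) m (R ++ [j])]
        rfl

end relax

def IsWalkWeight (A : ℕ → ℕ → WithTop ℤ) (n i j : ℕ) (c : WithTop ℤ) : Prop :=
  ∃ P : List ℕ, P ≠ [] ∧ (∀ v ∈ P, 1 ≤ v ∧ v ≤ n) ∧
    P.getD 0 0 = i ∧ P.getD (P.length - 1) 0 = j ∧ pathWeight A P = c

namespace IsWalkWeight

variable {A : ℕ → ℕ → WithTop ℤ} {n i j k : ℕ} {a b : WithTop ℤ}

theorem edge (hi : 1 ≤ i ∧ i ≤ n) (hj : 1 ≤ j ∧ j ≤ n) : IsWalkWeight A n i j (A i j) :=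
  ⟨[i, j], by simp, by simp [hi, hj], rfl, rfl, by simp⟩

theorem add (h₁ : IsWalkWeight A n i k a) (h₂ : IsWalkWeight A n k j b) :
    IsWalkWeight A n i j (a + b) := by
  obtain ⟨P₁, hP₁, hb₁, rfl, hk₁, rfl⟩ := h₁
  obtain ⟨P₂, hP₂, hb₂, hk₂, rfl, rfl⟩ := h₂
  obtain ⟨X, v, rfl⟩ : ∃ X v, P₁ = X ++ [v] :=
    ⟨P₁.dropLast, P₁.getLast hP₁, (P₁.dropLast_append_getLast hP₁).symm⟩
  obtain _ | ⟨w, Y⟩ := P₂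
  · contradiction
  rw [List.getD_length_sub_one_concat] at hk₁
  rw [List.getD_cons_zero] at hk₂
  subst hk₂ hk₁
  refine ⟨X ++ v :: Y, by simp, fun u hu => ?_, List.getD_zero_append_cons .., ?_,
    pathWeight_append_cons ..⟩
  · rcases List.mem_append.mp hu with hu | hu
    exacts [hb₁ u (by simp [hu]), hb₂ u hu]
  · rw [List.getD_length_sub_one_append _ _ (List.cons_ne_nil _ _)]

end IsWalkWeight

theorem isWalkWeight_relaxAll {A : ℕ → ℕ → WithTop ℤ} {n : ℕ} {T : List (ℕ × ℕ × ℕ)}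
    (hT : ∀ t ∈ T, 1 ≤ t.2.2 ∧ t.2.2 ≤ n) {B : ℕ → ℕ → WithTop ℤ}
    (hB : ∀ i j, 1 ≤ i ∧ i ≤ n → 1 ≤ j ∧ j ≤ n → IsWalkWeight A n i j (B i j)) {i j : ℕ}
    (hi : 1 ≤ i ∧ i ≤ n) (hj : 1 ≤ j ∧ j ≤ n) : IsWalkWeight A n i j (relaxAll B T i j) := by
  induction T generalizing B with
  | nil => exact hB i j hi hj
  | cons t T ih =>
    refine ih (fun s hs => hT s (List.mem_cons_of_mem t hs)) fun i j hi hj => ?_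
    have hk := hT t List.mem_cons_self
    unfold relaxStep
    split_ifs
    · rcases min_choice (B i j) (B i t.2.2 + B t.2.2 j) with h | h <;> rw [h]
      exacts [hB i j hi hj, (hB i t.2.2 hi hk).add (hB t.2.2 j hk hj)]
    · exact hB i j hi hj

theorem exists_isSimplePath_pathWeight_le {A : ℕ → ℕ → WithTop ℤ} {n : ℕ} (hA : NoNegCycle n A)
    {P : List ℕ} (hP : P ≠ []) (hb : ∀ v ∈ P, 1 ≤ v ∧ v ≤ n) :
    ∃ Q : List ℕ, IsSimplePath n Q ∧ Q ≠ [] ∧ Q.getD 0 0 = P.getD 0 0 ∧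
      Q.getD (Q.length - 1) 0 = P.getD (P.length - 1) 0 ∧ pathWeight A Q ≤ pathWeight A P := by
  by_cases hnd : P.Nodup
  · exact ⟨P, ⟨hnd, hb⟩, hP, rfl, rfl, le_rfl⟩
  obtain ⟨X, v, Y, Z, hXYZ⟩ := List.exists_eq_append_cons_append_cons_of_not_nodup hnd
  have hcycle_sub : (v :: Y ++ [v]).Sublist P := by rw [hXYZ]; simp
  have hshort_sub : (X ++ v :: Z).Sublist P := by rw [hXYZ]; simp
  have hcycle : 0 ≤ pathWeight A (v :: Y ++ [v]) :=
    hA _ (by simp) (fun w hw => hb w (hcycle_sub.subset hw)) (by simp)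
  have hle : pathWeight A (X ++ v :: Z) ≤ pathWeight A P := by
    rw [hXYZ, pathWeight_append_cons A X v (Y ++ v :: Z), pathWeight_append_cons A X v Z,
      show v :: (Y ++ v :: Z) = v :: Y ++ v :: Z from rfl, pathWeight_append_cons A (v :: Y) v Z]
    gcongr
    exact le_add_of_nonneg_left hcycle
  obtain ⟨Q, hQ, hQne, hQ₀, hQ₁, hQw⟩ :=
    exists_isSimplePath_pathWeight_le hA (P := X ++ v :: Z) (by simp) fun w hw =>
      hb w (hshort_sub.subset hw)
  refine ⟨Q, hQ, hQne, ?_, ?_, hQw.trans hle⟩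
  · rw [hQ₀, hXYZ, List.getD_zero_append_cons _ X v Z,
      List.getD_zero_append_cons _ X v (Y ++ v :: Z)]
  · rw [hQ₁, hXYZ, List.getD_length_sub_one_append _ _ (List.cons_ne_nil _ _),
      show X ++ v :: (Y ++ v :: Z) = X ++ v :: Y ++ v :: Z by simp,
      List.getD_length_sub_one_append _ _ (List.cons_ne_nil _ _)]
termination_by P.length
decreasing_by rw [hXYZ]; simp

theorem relaxAll_Tijk3_le {A : ℕ → ℕ → WithTop ℤ} {n i j : ℕ} {c : WithTop ℤ}
    (hA₀ : ∀ i, A i i = 0) (hA : NoNegCycle n A) (h : IsWalkWeight A n i j c) :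
    relaxAll A (Tijk3 n) i j ≤ c := by
  obtain ⟨P, hP, hb, rfl, rfl, rfl⟩ := h
  obtain ⟨Q, hQ, hQne, hQ₀, hQ₁, hQw⟩ := exists_isSimplePath_pathWeight_le hA hP hb
  rw [← hQ₀, ← hQ₁]
  exact ((realized_Tijk3 hQ).relaxAll_le_pathWeight A hA₀ hQne).trans hQw

theorem split_mem_of_mem_Tijk3 {n : ℕ} {t : ℕ × ℕ × ℕ} (ht : t ∈ Tijk3 n) :
    1 ≤ t.2.2 ∧ t.2.2 ≤ n := by
  simp only [Tijk3, Tijk, List.mem_append, or_self, List.mem_flatMap, List.mem_map,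
    List.mem_range] at ht
  obtain ⟨a, ha, b, hb, c, hc, rfl⟩ := ht
  exact ⟨c.succ_pos, hc⟩

/-- Every simple path on `[1,n]` is realized by `(T_ijk(n))³`; consequently three
IJK relaxation passes compute the correct all-pairs shortest path matrix on graphs
with no negative cycles. -/
theorem stmt6 (n : ℕ) :
    (∀ P : List ℕ, ValidPath n P → P.Nodup →
      Realized (Tijk n ++ Tijk n ++ Tijk n) P) ∧
    (∀ A : ℕ → ℕ → WithTop ℤ, (∀ i, A i i = 0) → NoNegCycle n A →
      ∀ i j, 1 ≤ i → i ≤ n → 1 ≤ j → j ≤ n →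
        IsLeast {c | ∃ P : List ℕ, P ≠ [] ∧ (∀ v ∈ P, 1 ≤ v ∧ v ≤ n) ∧
            P.getD 0 0 = i ∧ P.getD (P.length - 1) 0 = j ∧ pathWeight A P = c}
          (relaxAll A (Tijk n ++ Tijk n ++ Tijk n) i j)) := by
  refine ⟨fun P hP hnd => realized_Tijk3 ⟨hnd, hP.2⟩, fun A hA₀ hA i j hi hi' hj hj' => ⟨?_, ?_⟩⟩
  · exact isWalkWeight_relaxAll (fun _ => split_mem_of_mem_Tijk3) (fun _ _ => .edge)
      ⟨hi, hi'⟩ ⟨hj, hj'⟩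
  · exact fun _ => relaxAll_Tijk3_le hA₀ hA
end

section
/- Both the prefix subpath (p_0,...,p_m) and the suffix subpath (p_m,...,p_k) of any simple path P, where p_m is the maximum vertex of P, are realized by (T_{ijk}(n))², the sequence T_{ijk}(n) repeated twice. -/
/-!
In `Tijk n` the tuples `(a, b, ·)` form one block, and blocks are ordered lexicographically by
`(a, b)`. A path `a, …, b` whose interior vertices all lie below `min a b` (a valley) is split at
its largest interior vertex `x`: both halves are again valleys, and their blocks `(a, x, ·)` and
`(x, b, ·)` precede the tuple `(a, b, x)` because `x < b` and `x < a`. Hence every valley is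
realized by `Tijk n` up to the end of its block `(a, b, ·)`.

If the interior only lies below `max a b`, split again at the largest interior vertex `x`. If the
path is not a valley, say `a < x < b`, then the half `x, …, b` is a valley, realized in the first copy
of `Tijk n`, while `a, …, x` is again of this kind and, by induction, realized before the tuple
`(a, b, x)` of the second copy, since `x < b`.
The two subpaths at the maximum vertex of a simple path are of this kind.
-/

theorem List.Nodup.exists_split_at_max {α : Type*} [LinearOrder α] {l : List α}
    (hl : l.Nodup) (hne : l ≠ []) :
    ∃ L x R, l = L ++ x :: R ∧ (∀ v ∈ L, v < x) ∧ ∀ v ∈ R, v < x := by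
  obtain ⟨x, hx, hmax⟩ := l.toFinset.exists_max_image id (by simpa using hne)
  obtain ⟨L, R, rfl⟩ := List.append_of_mem (List.mem_toFinset.1 hx)
  have hxLR : x ∉ L ∧ x ∉ R := by simpa using (List.nodup_cons.1 (List.nodup_middle.1 hl)).1
  refine ⟨L, x, R, rfl, fun v hv => ?_, fun v hv => ?_⟩
  · exact (hmax v (by simp [hv])).lt_of_ne (by rintro rfl; exact hxLR.1 hv)
  · exact (hmax v (by simp [hv])).lt_of_ne (by rintro rfl; exact hxLR.2 hv)

theorem List.getElem?_flatMap_mul_add {α β : Type*} {f : α → List β} {L : ℕ}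
    (hf : ∀ a, (f a).length = L) (l : List α) {i r : ℕ} (hr : r < L) :
    (l.flatMap f)[i * L + r]? = l[i]?.bind fun a => (f a)[r]? := by
  induction l generalizing i with
  | nil => simp
  | cons a l ih =>
    rcases i with _ | i
    · simp [List.getElem?_append_left, hf, hr]
    · rw [List.flatMap_cons, List.getElem?_append_right (by rw [hf]; nlinarith), hf,
        show (i + 1) * L + r - L = i * L + r by rw [add_mul, one_mul]; omega, ih]
      simp

def tijkIndex (n a b c : ℕ) : ℕ := (a - 1) * n ^ 2 + (b - 1) * n + (c - 1)

theorem Tijk_getElem?_tijkIndex {n a b c : ℕ} (ha : 1 ≤ a) (han : a ≤ n) (hb : 1 ≤ b)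
    (hbn : b ≤ n) (hc : 1 ≤ c) (hcn : c ≤ n) : (Tijk n)[tijkIndex n a b c]? = some (a, b, c) := by
  have hinner : ∀ a', ((List.range n).flatMap fun b' =>
      (List.range n).map fun c' => (a' + 1, b' + 1, c' + 1)).length = n * n := by
    simp [List.length_flatMap]
  rw [Tijk, tijkIndex, show (a - 1) * n ^ 2 + (b - 1) * n + (c - 1)
      = (a - 1) * (n * n) + ((b - 1) * n + (c - 1)) by ring,
    List.getElem?_flatMap_mul_add hinner _ (by
      have := Nat.mul_le_mul_right n (show b - 1 + 1 ≤ n by omega); rw [add_mul] at this; omega),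
    List.getElem?_range (by omega), Option.bind_some,
    List.getElem?_flatMap_mul_add (L := n) (by simp) _ (by omega)]
  simp only [List.getElem?_range (show b - 1 < n by omega), List.getElem?_map,
    List.getElem?_range (show c - 1 < n by omega), Option.map_some, Option.bind_some,
    Option.some.injEq, Prod.mk.injEq]
  omega

theorem Realized.mono_s8 {T T' : List (ℕ × ℕ × ℕ)} {P : List ℕ} (h : Realized T P) (hT : T <+: T') :
    Realized T' P := by
  induction h generalizing T' with
  | base _ _ h => exact .base _ _ h
  | step T P d x hd hx1 hx2 ht _ _ ih1 ih2 =>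
    obtain ⟨U, rfl⟩ := hT
    have htake : (T ++ U).take d = T.take d := List.take_append_of_le_length hd.le
    refine .step _ _ d x (by rw [List.length_append]; omega) hx1 hx2 ?_
      (htake ▸ ih1 (List.prefix_refl _)) (htake ▸ ih2 (List.prefix_refl _))
    rwa [List.getD_append _ _ _ _ hd]

theorem Realized.split {S T : List (ℕ × ℕ × ℕ)} {a b x : ℕ} {L R : List ℕ}
    (hT : S ++ [(a, b, x)] <+: T) (hL : Realized S (a :: L ++ [x]))
    (hR : Realized S (x :: R ++ [b])) : Realized T (a :: (L ++ x :: R) ++ [b]) := by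
  refine (Realized.step (S ++ [(a, b, x)]) _ S.length (L.length + 1) (by simp) le_add_self
    (by simp) ?_ ?_ ?_).mono_s8 hT
  · simp [List.getD_eq_getElem?_getD, List.getElem_cons, List.getElem_append_right]
  · simpa [List.take_append, List.take_of_length_le] using hL
  · simpa [List.drop_append] using hR

section Prefixes

variable {n a b x : ℕ}

theorem take_tijkIndex_append_prefix_tijkPrefix (ha : 1 ≤ a) (han : a ≤ n) (hb : 1 ≤ b)
    (hbn : b ≤ n) (hx : 1 ≤ x) (hxn : x ≤ n) :
    (Tijk n).take (tijkIndex n a b x) ++ [(a, b, x)] <+: TijkPrefix n a b := by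
  rw [← Option.toList_some, ← Tijk_getElem?_tijkIndex ha han hb hbn hx hxn, ← List.take_add_one]
  exact List.take_prefix_take_left (by unfold tijkIndex; omega)

theorem tijkPrefix_prefix_take_tijkIndex_of_lt_right (hx : 1 ≤ x) (hxb : x < b) :
    TijkPrefix n a x <+: (Tijk n).take (tijkIndex n a b x) := by
  refine List.take_prefix_take_left ?_
  have := Nat.mul_le_mul_right n (show x - 1 + 1 ≤ b - 1 by omega)
  rw [add_mul] at this
  unfold tijkIndex
  omega

theorem tijkPrefix_prefix_take_tijkIndex_of_lt_left (hb : 1 ≤ b) (hbn : b ≤ n) (hx : 1 ≤ x)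
    (hxa : x < a) :
    TijkPrefix n x b <+: (Tijk n).take (tijkIndex n a b x) := by
  refine List.take_prefix_take_left ?_
  have hbn' := Nat.mul_le_mul_right n (show b - 1 + 1 ≤ n by omega)
  have hxa' := Nat.mul_le_mul_right (n ^ 2) (show x - 1 + 1 ≤ a - 1 by omega)
  rw [add_mul, one_mul] at hbn' hxa'
  rw [← pow_two] at hbn'
  unfold tijkIndex
  omega

theorem tijkPrefix_prefix_tijk_append (l : List (ℕ × ℕ × ℕ)) : TijkPrefix n a b <+: Tijk n ++ l :=
  (List.take_prefix _ _).trans (List.prefix_append _ _)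

end Prefixes

section Halves

variable {a b x : ℕ} {L R : List ℕ}

theorem left_half_sublist : (a :: L ++ [x]).Sublist (a :: (L ++ x :: R) ++ [b]) := by
  simp

theorem right_half_sublist : (x :: R ++ [b]).Sublist (a :: (L ++ x :: R) ++ [b]) := by
  simp

end Halves

theorem realized_tijkPrefix_of_forall_lt_min {n a b : ℕ} {M : List ℕ}
    (hP : IsSimplePath n (a :: M ++ [b])) (hlt : ∀ v ∈ M, v < a ∧ v < b) :
    Realized (TijkPrefix n a b) (a :: M ++ [b]) := by
  rcases eq_or_ne M [] with rfl | hM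
  · exact .base _ _ (by simp)
  obtain ⟨L, x, R, rfl, hLx, hRx⟩ := (hP.1.sublist (by simp)).exists_split_at_max hM
  have ha := hP.2 a (by simp)
  have hb := hP.2 b (by simp)
  have hx := hP.2 x (by simp)
  have hxab := hlt x (by simp)
  refine Realized.split (take_tijkIndex_append_prefix_tijkPrefix ha.1 ha.2 hb.1 hb.2 hx.1 hx.2)
    ?_ ?_
  · refine (realized_tijkPrefix_of_forall_lt_min (hP.sublist left_half_sublist)
      fun v hv => ⟨(hlt v (by simp [hv])).1, hLx v hv⟩).mono_s8 ?_
    exact tijkPrefix_prefix_take_tijkIndex_of_lt_right hx.1 hxab.2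
  · refine (realized_tijkPrefix_of_forall_lt_min (hP.sublist right_half_sublist)
      fun v hv => ⟨hRx v hv, (hlt v (by simp [hv])).2⟩).mono_s8 ?_
    exact tijkPrefix_prefix_take_tijkIndex_of_lt_left hb.1 hb.2 hx.1 hxab.1
termination_by M.length
decreasing_by all_goals subst_vars; simp only [List.length_append, List.length_cons]; omega

theorem realized_tijk_append_tijkPrefix_of_forall_lt_max {n a b : ℕ} {M : List ℕ}
    (hP : IsSimplePath n (a :: M ++ [b])) (hlt : ∀ v ∈ M, v < max a b) :
    Realized (Tijk n ++ TijkPrefix n a b) (a :: M ++ [b]) := by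
  rcases eq_or_ne M [] with rfl | hM
  · exact .base _ _ (by simp)
  obtain ⟨L, x, R, rfl, hLx, hRx⟩ := (hP.1.sublist (by simp)).exists_split_at_max hM
  have ha := hP.2 a (by simp)
  have hb := hP.2 b (by simp)
  have hx := hP.2 x (by simp)
  by_cases hvalley : x < a ∧ x < b
  · have hle : ∀ v ∈ L ++ x :: R, v ≤ x := by
      simp only [List.mem_append, List.mem_cons]
      rintro v (hv | rfl | hv)
      exacts [(hLx v hv).le, le_rfl, (hRx v hv).le]
    refine (realized_tijkPrefix_of_forall_lt_min hP fun v hv =>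
      ⟨(hle v hv).trans_lt hvalley.1, (hle v hv).trans_lt hvalley.2⟩).mono_s8
      (tijkPrefix_prefix_tijk_append _)
  have hsplit : Tijk n ++ (Tijk n).take (tijkIndex n a b x) ++ [(a, b, x)] <+:
      Tijk n ++ TijkPrefix n a b := by
    simpa using take_tijkIndex_append_prefix_tijkPrefix ha.1 ha.2 hb.1 hb.2 hx.1 hx.2
  have hxab : x < a ∨ x < b := lt_max_iff.1 (hlt x (by simp))
  rcases le_or_gt a x with hax | hxa
  · have hxb : x < b := by omega
    refine Realized.split hsplit ?_ ?_
    · refine (realized_tijk_append_tijkPrefix_of_forall_lt_max (hP.sublist left_half_sublist)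
        fun v hv => lt_max_of_lt_right (hLx v hv)).mono_s8 ?_
      simpa using tijkPrefix_prefix_take_tijkIndex_of_lt_right hx.1 hxb
    · refine (realized_tijkPrefix_of_forall_lt_min (hP.sublist right_half_sublist)
        fun v hv => ⟨hRx v hv, (hRx v hv).trans hxb⟩).mono_s8 ?_
      exact tijkPrefix_prefix_tijk_append _
  · refine Realized.split hsplit ?_ ?_
    · refine (realized_tijkPrefix_of_forall_lt_min (hP.sublist left_half_sublist)
        fun v hv => ⟨(hLx v hv).trans hxa, hLx v hv⟩).mono_s8 ?_
      exact tijkPrefix_prefix_tijk_append _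
    · refine (realized_tijk_append_tijkPrefix_of_forall_lt_max (hP.sublist right_half_sublist)
        fun v hv => lt_max_of_lt_left (hRx v hv)).mono_s8 ?_
      simpa using tijkPrefix_prefix_take_tijkIndex_of_lt_left hb.1 hb.2 hx.1 hxa
termination_by M.length
decreasing_by all_goals subst_vars; simp only [List.length_append, List.length_cons]; omega

theorem realized_tijk_append_tijk_of_le_max_endpoints {n : ℕ} {Q : List ℕ}
    (hQ : IsSimplePath n Q) (hmax : ∀ v ∈ Q, v ≤ max (Q.headD 0) (Q.getLastD 0)) :
    Realized (Tijk n ++ Tijk n) Q := by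
  rcases Q.eq_nil_or_concat' with rfl | ⟨_ | ⟨a, M⟩, b, rfl⟩
  · exact .base _ _ (by simp)
  · exact .base _ _ (by simp)
  rw [List.getLastD_concat, List.cons_append, List.headD_cons] at hmax
  obtain ⟨⟨haM, -⟩, -, hbM⟩ : (a ∉ M ∧ a ≠ b) ∧ M.Nodup ∧ ∀ v ∈ M, v ≠ b := by
    simpa [List.nodup_append] using hQ.1
  have hlt : ∀ v ∈ M, v < max a b := fun v hv =>
    (hmax v (by simp [hv])).lt_of_ne <| by
      rcases max_choice a b with h | h <;> rw [h] <;> rintro rfl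
      exacts [haM hv, hbM v hv rfl]
  exact (realized_tijk_append_tijkPrefix_of_forall_lt_max hQ hlt).mono_s8
    ((List.prefix_append_right_inj _).2 (List.take_prefix _ _))

/-- Both the prefix up to and the suffix from the maximum vertex of a simple path are
realized by `(T_ijk(n))²`. -/
theorem stmt8 (n : ℕ) (P : List ℕ) (hP : ValidPath n P) (hnd : P.Nodup)
    (m : ℕ) (hm : m < P.length) (hmax : ∀ t < P.length, P.getD t 0 ≤ P.getD m 0) :
    Realized (Tijk n ++ Tijk n) (P.take (m + 1)) ∧
    Realized (Tijk n ++ Tijk n) (P.drop m) := by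
  have hPs : IsSimplePath n P := ⟨hnd, hP.2⟩
  have hle : ∀ v ∈ P, v ≤ P[m] := by
    intro v hv
    obtain ⟨t, ht, rfl⟩ := List.mem_iff_getElem.1 hv
    simpa [List.getD_eq_getElem, ht, hm] using hmax t ht
  have hlast : (P.take (m + 1)).getLastD 0 = P[m] := by
    rw [← List.take_concat_get' _ _ hm, List.getLastD_concat]
  have hhead : (P.drop m).headD 0 = P[m] := by
    rw [List.drop_eq_getElem_cons hm]
    rfl
  constructor
  · refine realized_tijk_append_tijk_of_le_max_endpoints (hPs.sublist (List.take_sublist _ _))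
      fun v hv => ?_
    exact hlast ▸ le_max_of_le_right (hle v (List.mem_of_mem_take hv))
  · refine realized_tijk_append_tijk_of_le_max_endpoints (hPs.sublist (List.drop_sublist _ _))
      fun v hv => ?_
    exact hhead ▸ le_max_of_le_left (hle v (List.mem_of_mem_drop hv))
end
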